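/- arXiv:math/0105124 — 2 statements merged into one kernel-verified Lean document; each statement's English description precedes it below -/
import Mathlib

section
/- Let C be a nonempty finite set and λ : C → ℤ with ∑_c λ(c) = 0 and λ ≠ 0. Let X ⊆ ℤ^C be the subgroup of elements with coordinate sum 0, and let g = ∑ λ(c)e_c ∈ X. Write λ(c) = d·μ(c) with d = gcd_{c ∈ C} λ(c). Then the torsion subgroup of X/ℤg is cyclic of order d. -/
open Finset

/-- Let `X` be the degree-zero subgroup of `ℤ^C` and `g = ∑ λ(c) e_c` with `∑ λ(c) = 0`,
`λ ≠ 0`, `λ(c) = d·μ(c)` with `d = gcd_c λ(c)`. Then the torsion subgroup of `X/ℤg`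
is cyclic of order `d`. -/
theorem stmt8 (C : Type*) [Fintype C] [Nonempty C]
    (lam : C → ℤ) (hlam : ∑ c, lam c = 0) (hne : lam ≠ 0)
    (X : Submodule ℤ (C → ℤ)) (hX : ∀ x : C → ℤ, x ∈ X ↔ ∑ c, x c = 0)
    (g : X) (hg : (g : C → ℤ) = lam)
    (d : ℤ) (hd : d = Finset.univ.gcd lam)
    (mu : C → ℤ) (hmu : ∀ c, lam c = d * mu c) :
    IsAddCyclic (Submodule.torsion ℤ (X ⧸ Submodule.span ℤ {g})) ∧
      Nat.card (Submodule.torsion ℤ (X ⧸ Submodule.span ℤ {g})) = d.natAbs := by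
  have hd0 : d ≠ 0 := by
    intro h
    apply hne
    funext c
    have h0 : Finset.univ.gcd lam = 0 := by rw [← hd, h]
    exact Finset.gcd_eq_zero_iff.mp h0 c (mem_univ c)
  have hsum : ∑ c, mu c = 0 := by
    have h1 : d * ∑ c, mu c = 0 := by
      rw [Finset.mul_sum]
      simp_rw [← hmu]
      exact hlam
    exact (mul_eq_zero.mp h1).resolve_left hd0
  have hnorm : normalize d = d := by rw [hd, Finset.normalize_gcd]
  have hgcdmu : Finset.univ.gcd mu = 1 := by
    have h1 : d * 1 = d * Finset.univ.gcd mu := by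
      rw [mul_one]
      calc d = Finset.univ.gcd lam := hd
        _ = Finset.univ.gcd (fun c => d * mu c) :=
            Finset.gcd_congr rfl (fun c _ => hmu c)
        _ = normalize d * Finset.univ.gcd mu := Finset.gcd_mul_left
        _ = d * Finset.univ.gcd mu := by rw [hnorm]
    exact (mul_left_cancel₀ hd0 h1).symm
  set N := Submodule.span ℤ ({g} : Set X) with hN
  set muX : X := ⟨mu, (hX mu).mpr hsum⟩ with hmuX
  have hgmu : g = d • muX := by
    apply Subtype.ext
    rw [hg]
    funext c
    simpa using hmu c
  -- membership of multiples of muX in N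
  have hdimN : ∀ k : ℤ, k • muX ∈ N ↔ d ∣ k := by
    intro k
    rw [hN, Submodule.mem_span_singleton]
    constructor
    · rintro ⟨m, hm⟩
      obtain ⟨c, hc⟩ : ∃ c, mu c ≠ 0 := by
        by_contra h
        push_neg at h
        apply hne
        funext c
        simp [hmu c, h c]
      have h2 := congrFun (congrArg Subtype.val hm) c
      simp only [Submodule.coe_smul, hg, Pi.smul_apply, smul_eq_mul, hmuX, hmu c] at h2
      have : k = m * d := by
        have := mul_right_cancel₀ hc (by linarith [h2] : m * d * mu c = k * mu c)
        omega
      exact ⟨m, by rw [this, mul_comm]⟩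
    · rintro ⟨m, rfl⟩
      exact ⟨m, by rw [hgmu, smul_smul, mul_comm]⟩
  set t : X ⧸ N := Submodule.Quotient.mk muX with ht
  have hkt : ∀ k : ℤ, k • t = 0 ↔ d ∣ k := by
    intro k
    rw [ht, ← Submodule.Quotient.mk_smul, Submodule.Quotient.mk_eq_zero]
    exact hdimN k
  have htors : t ∈ Submodule.torsion ℤ (X ⧸ N) :=
    ⟨⟨d, mem_nonZeroDivisors_of_ne_zero hd0⟩, by
      exact (hkt d).mpr dvd_rfl⟩
  set tor : Submodule.torsion ℤ (X ⧸ N) := ⟨t, htors⟩ with htor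
  -- generation
  have hgen : ∀ z : Submodule.torsion ℤ (X ⧸ N), ∃ k : ℤ, k • tor = z := by
    rintro ⟨z, ⟨n, hn⟩, hz⟩
    obtain ⟨x, rfl⟩ := Submodule.Quotient.mk_surjective N z
    have hn0 : n ≠ 0 := nonZeroDivisors.ne_zero hn
    rw [Submonoid.smul_def, ← Submodule.Quotient.mk_smul,
      Submodule.Quotient.mk_eq_zero] at hz
    rw [hN, Submodule.mem_span_singleton] at hz
    obtain ⟨m, hm⟩ := hz
    rw [hgmu, smul_smul] at hm
    have hcoord : ∀ c, (m * d) * mu c = n * (x : C → ℤ) c := by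
      intro c
      have := congrFun (congrArg Subtype.val hm) c
      simpa [hmuX] using this
    have hdvd : n ∣ m * d := by
      have h3 : n ∣ Finset.univ.gcd (fun c => (m * d) * mu c) :=
        Finset.dvd_gcd fun c _ => ⟨(x : C → ℤ) c, hcoord c⟩
      rwa [Finset.gcd_mul_left, hgcdmu, mul_one, dvd_normalize_iff] at h3
    obtain ⟨q, hq⟩ := hdvd
    have hx : x = q • muX := by
      apply Subtype.ext
      funext c
      have h4 : n * (x : C → ℤ) c = n * (q * mu c) := by
        rw [← hcoord c, hq]; ring
      have := mul_left_cancel₀ hn0 h4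
      simpa [hmuX] using this
    refine ⟨q, Subtype.ext ?_⟩
    show q • t = Submodule.Quotient.mk x
    rw [hx, ht, Submodule.Quotient.mk_smul]
  have hktor : ∀ k : ℤ, k • tor = 0 ↔ d ∣ k := by
    intro k
    rw [← hkt k]
    exact ⟨fun h => Subtype.ext_iff.mp h, fun h => Subtype.ext h⟩
  -- the hom from ZMod d.natAbs
  set f : ℤ →+ Submodule.torsion ℤ (X ⧸ N) :=
    (LinearMap.toSpanSingleton ℤ _ tor).toAddMonoidHom with hf
  have hfk : ∀ k : ℤ, f k = k • tor := fun k => LinearMap.toSpanSingleton_apply ℤ _ tor k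
  have hfd : f ((d.natAbs : ℕ) : ℤ) = 0 := by
    rw [hfk]
    exact (hktor _).mpr (Int.dvd_natAbs.mpr dvd_rfl)
  set F := ZMod.lift d.natAbs ⟨f, hfd⟩ with hF
  have hsurj : Function.Surjective F := by
    intro z
    obtain ⟨k, hk⟩ := hgen z
    exact ⟨(k : ZMod d.natAbs), by rw [hF, ZMod.lift_coe, hfk, hk]⟩
  have hinj : Function.Injective F := by
    rw [injective_iff_map_eq_zero]
    intro a ha
    obtain ⟨k, rfl⟩ := ZMod.intCast_surjective a
    rw [hF, ZMod.lift_coe, hfk, hktor] at ha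
    exact (ZMod.intCast_zmod_eq_zero_iff_dvd k d.natAbs).mpr (Int.natAbs_dvd.mpr ha)
  constructor
  · exact isAddCyclic_of_surjective F hsurj
  · rw [Nat.card_congr (AddEquiv.ofBijective F ⟨hinj, hsurj⟩).toEquiv.symm, Nat.card_zmod]
end

section
/- Let X be a free abelian group of finite rank with an injective symmetric pairing map φ : X → Hom(X,ℤ), and similarly X_E with φ_E : X_E → Hom(X_E,ℤ) injective, X_E ≅ ℤ. Let π_* : X → X_E be surjective and π^* : X_E → X satisfy φ_E(ξ)(π_*(η)) = φ(π^*(ξ))(η) for all ξ, η. Then the induced map on cokernels π̄_* : coker(φ) → coker(φ_E) has cokernel isomorphic to Hom(X_E,ℤ)/(φ_E(X_E) + β(Hom(X,ℤ))), where β = Hom(π^*, ℤ); moreover φ_E(X_E) ⊆ β(Hom(X,ℤ)), so this cokernel equals Hom(X_E,ℤ)/β(Hom(X,ℤ)). -/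
/-- Abstraction of Ribet's diagram (1): with monodromy-pairing maps `φ, φE` injective,
`π_*` surjective and adjoint to `π^*`, and `β = Hom(π^*, ℤ)`, the induced map on
component groups `π̄_* : coker φ → coker φE` has cokernel `Hom(X_E,ℤ)/β(Hom(X,ℤ))`;
in particular `φE(X_E) ⊆ β(Hom(X,ℤ))`. -/
theorem stmt9 (X XE : Type*) [AddCommGroup X] [Module ℤ X]
    [Module.Free ℤ X] [Module.Finite ℤ X]
    [AddCommGroup XE] [Module ℤ XE] [Module.Free ℤ XE] [Module.Finite ℤ XE]
    (e : XE ≃ₗ[ℤ] ℤ)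
    (φ : X →ₗ[ℤ] Module.Dual ℤ X) (hφsymm : ∀ x y, φ x y = φ y x)
    (hφ : Function.Injective φ)
    (φE : XE →ₗ[ℤ] Module.Dual ℤ XE) (hφEsymm : ∀ x y, φE x y = φE y x)
    (hφE : Function.Injective φE)
    (pis : X →ₗ[ℤ] XE) (hpis : Function.Surjective pis)
    (pist : XE →ₗ[ℤ] X)
    (hadj : ∀ (ξ : XE) (η : X), φE ξ (pis η) = φ (pist ξ) η)
    (β : Module.Dual ℤ X →ₗ[ℤ] Module.Dual ℤ XE) (hβ : β = pist.dualMap)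
    (pibar : (Module.Dual ℤ X ⧸ LinearMap.range φ) →ₗ[ℤ]
      (Module.Dual ℤ XE ⧸ LinearMap.range φE))
    (hpibar : ∀ f : Module.Dual ℤ X,
      pibar (Submodule.Quotient.mk f) = Submodule.Quotient.mk (β f)) :
    LinearMap.range φE ≤ LinearMap.range β ∧
      Nonempty (((Module.Dual ℤ XE ⧸ LinearMap.range φE) ⧸ LinearMap.range pibar) ≃ₗ[ℤ]
        (Module.Dual ℤ XE ⧸ LinearMap.range β)) := by
  have hsub : LinearMap.range φE ≤ LinearMap.range β := by
    rintro _ ⟨ξ, rfl⟩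
    obtain ⟨η, rfl⟩ := hpis ξ
    refine ⟨φ η, ?_⟩
    ext ζ
    simp only [hβ, LinearMap.dualMap_apply', LinearMap.comp_apply]
    rw [hφsymm, ← hadj, hφEsymm]
  refine ⟨hsub, ?_⟩
  have hrange : LinearMap.range pibar =
      (LinearMap.range β).map (LinearMap.range φE).mkQ := by
    ext x
    constructor
    · rintro ⟨q, rfl⟩
      obtain ⟨f, rfl⟩ := Submodule.mkQ_surjective _ q
      exact ⟨β f, ⟨f, rfl⟩, (hpibar f).symm⟩
    · rintro ⟨_, ⟨f, rfl⟩, rfl⟩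
      exact ⟨Submodule.Quotient.mk f, hpibar f⟩
  rw [hrange]
  exact ⟨Submodule.quotientQuotientEquivQuotient _ _ hsub⟩
end
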